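/- Let ρ be a smooth real-valued function on an open set U ⊂ ℂⁿ (n > 1) with dρ ≠ 0 on M = {z ∈ U : ρ(z) = 0}, and suppose M is strictly pseudoconvex: the complex Hessian H(ρ)(z) = [∂²ρ/∂z_i∂z̄_j(z)] is positive definite on the complex tangent space H_zM = {w ∈ ℂⁿ : Σ_j (∂ρ/∂z_j)(z) w_j = 0} for every z ∈ M. Fix z⁰ ∈ M with (∂ρ/∂z_n)(z⁰) ≠ 0 and define, on a neighborhood of z⁰, the map G(z) = (z, a₁(z), …, a_{n−1}(z)) ∈ ℂⁿ × ℂ^{n−1} ≅ ℂ^{2n−1}, where a_j = (∂ρ/∂z_j)/(∂ρ/∂z_n) (so G records z together with affine coordinates of the complex tangent hyperplane H_zM). Then the image of M under G is totally real at G(z⁰): the real subspace T = dG_{z⁰}(T_{z⁰}M) ⊂ ℂ^{2n−1}, where T_{z⁰}M = ker(dρ_{z⁰}) is the real tangent space of M, satisfies T ∩ iT = {0}. -/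

import Mathlib

open Complex Metric

noncomputable section

/-- The Wirtinger derivative `∂f/∂z_j` of `f : ℂⁿ → ℂ` at `z`. -/
def wDz (n : ℕ) (j : Fin n) (f : EuclideanSpace ℂ (Fin n) → ℂ)
    (z : EuclideanSpace ℂ (Fin n)) : ℂ :=
  (fderiv ℝ f z (EuclideanSpace.single j 1)
    - Complex.I * fderiv ℝ f z (EuclideanSpace.single j Complex.I)) / 2

/-- The Wirtinger derivative `∂f/∂z̄_j` of `f : ℂⁿ → ℂ` at `z`. -/
def wDzBar (n : ℕ) (j : Fin n) (f : EuclideanSpace ℂ (Fin n) → ℂ)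
    (z : EuclideanSpace ℂ (Fin n)) : ℂ :=
  (fderiv ℝ f z (EuclideanSpace.single j 1)
    + Complex.I * fderiv ℝ f z (EuclideanSpace.single j Complex.I)) / 2

/-- The complex Hessian matrix `H(u)(z) = [∂²u/∂z_i∂z̄_j(z)]` of a real-valued `u`. -/
def cHess (n : ℕ) (u : EuclideanSpace ℂ (Fin n) → ℝ)
    (z : EuclideanSpace ℂ (Fin n)) : Matrix (Fin n) (Fin n) ℂ :=
  Matrix.of fun i j => wDz n i (fun w => wDzBar n j (fun v => ((u v : ℝ) : ℂ)) w) z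

/-- The Hermitian form `Σ_{i,j} H(u)(z)_{ij} w_i w̄_j`. -/
def cHessForm (n : ℕ) (u : EuclideanSpace ℂ (Fin n) → ℝ)
    (z : EuclideanSpace ℂ (Fin n)) (w : Fin n → ℂ) : ℂ :=
  ∑ i, ∑ j, cHess n u z i j * w i * (starRingEnd ℂ) (w j)

/-- The pairing `Σ_j (∂u/∂z_j)(z) w_j` of the complex gradient with a vector. -/
def cGradPair (n : ℕ) (u : EuclideanSpace ℂ (Fin n) → ℝ)
    (z : EuclideanSpace ℂ (Fin n)) (w : Fin n → ℂ) : ℂ :=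
  ∑ j, wDz n j (fun v => ((u v : ℝ) : ℂ)) z * w j

/-- `ρ` is a `C^k` defining function for `Ω`, defined on the open neighborhood `U` of `Ω̄`. -/
def IsDefiningFn (n : ℕ) (k : ℕ∞) (Ω U : Set (EuclideanSpace ℂ (Fin n)))
    (ρ : EuclideanSpace ℂ (Fin n) → ℝ) : Prop :=
  IsOpen U ∧ closure Ω ⊆ U ∧ ContDiffOn ℝ k ρ U ∧
    Ω = {z ∈ U | ρ z < 0} ∧ ∀ z ∈ frontier Ω, fderiv ℝ ρ z ≠ 0

/-- `Ω` is a bounded strictly pseudoconvex domain with `C^k` boundary. -/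
def IsStrictlyPseudoconvexDomain (n : ℕ) (k : ℕ∞)
    (Ω : Set (EuclideanSpace ℂ (Fin n))) : Prop :=
  IsOpen Ω ∧ Bornology.IsBounded Ω ∧
    ∃ U ρ, IsDefiningFn n k Ω U ρ ∧
      ∀ z ∈ frontier Ω, ∀ w : Fin n → ℂ, w ≠ 0 →
        cGradPair n ρ z w = 0 → 0 < (cHessForm n ρ z w).re

/-- The complex Jacobian matrix `φ'(z) = [∂φ_i/∂z_j(z)]` of `φ : ℂⁿ → ℂⁿ`. -/
def jacobian (n : ℕ) (φ : EuclideanSpace ℂ (Fin n) → EuclideanSpace ℂ (Fin n))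
    (z : EuclideanSpace ℂ (Fin n)) : Matrix (Fin n) (Fin n) ℂ :=
  Matrix.of fun i j => wDz n j (fun w => φ w i) z

/-- `φ` is a proper map from `Ω₁` to `Ω₂`. -/
def IsProperMapOn (n : ℕ) (φ : EuclideanSpace ℂ (Fin n) → EuclideanSpace ℂ (Fin n))
    (Ω₁ Ω₂ : Set (EuclideanSpace ℂ (Fin n))) : Prop :=
  Set.MapsTo φ Ω₁ Ω₂ ∧ ∀ K ⊆ Ω₂, IsCompact K → IsCompact {z ∈ Ω₁ | φ z ∈ K}


/-- The index `n-1 : Fin n` (the "last", complex normal, coordinate). -/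
def lastIdx (n : ℕ) (hn : 0 < n) : Fin n := ⟨n - 1, Nat.sub_lt hn one_pos⟩

/-- Webster's map `G(z) = (z, a₁(z), …, a_{n-1}(z))` with
`a_j = (∂ρ/∂z_j)/(∂ρ/∂z_n)`, recording the complex tangent hyperplane of `M`. -/
def websterMap (n : ℕ) (hn : 0 < n) (ρ : EuclideanSpace ℂ (Fin n) → ℝ)
    (z : EuclideanSpace ℂ (Fin n)) :
    EuclideanSpace ℂ (Fin n) × (Fin (n - 1) → ℂ) :=
  (z, fun j => wDz n (Fin.castLE (Nat.sub_le n 1) j) (fun v => ((ρ v : ℝ) : ℂ)) z /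
        wDz n (lastIdx n hn) (fun v => ((ρ v : ℝ) : ℂ)) z)

/-! Since `dG_{z⁰} v = (v, (da_j v)_j)`, the relation `dG v = i • dG w` forces `v = i w` and makes
every `da_j` `ℂ`-linear at `w`. For a real-linear map `ℓ` one has
`ℓ (i w) - i ℓ w = -2i ∑_k (∂ℓ/∂z̄_k) w̄_k`; applied to `ℓ = d(∂ρ/∂z_j)`, with the symmetry of
mixed partials, this is `-2i (H w̄)_j`. The quotient rule for `a_j = ρ_j / ρ_n` thus turns
`ℂ`-linearity of `da_j` into `ρ_n (H w̄)_j = ρ_j (H w̄)_n`: the vector `H w̄` is proportional to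
`∂ρ`. As `w` and `i w` lie in `ker dρ`, `∑_j ρ_j w_j = 0`, so the Levi form `∑_j w_j (H w̄)_j`
vanishes, and strict pseudoconvexity gives `w = 0`. -/

open ComplexConjugate

theorem EuclideanSpace.sum_single_apply {𝕜 ι : Type*} [RCLike 𝕜] [Fintype ι] [DecidableEq ι]
    (w : EuclideanSpace 𝕜 ι) : ∑ k, EuclideanSpace.single k (w k) = w := by
  ext m
  simp

theorem hasFDerivAt_fderiv_apply {E F : Type*} [NormedAddCommGroup E] [NormedSpace ℝ E]
    [NormedAddCommGroup F] [NormedSpace ℝ F] {f : E → F} {B : E →L[ℝ] E →L[ℝ] F} {z : E}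
    (hB : HasFDerivAt (fderiv ℝ f) B z) (a : E) :
    HasFDerivAt (fun y => fderiv ℝ f y a) (B.flip a) z :=
  (ContinuousLinearMap.apply ℝ F a).hasFDerivAt.comp z hB

theorem ContDiffAt.hasFDerivAt_fderiv {E F : Type*} [NormedAddCommGroup E] [NormedSpace ℝ E]
    [NormedAddCommGroup F] [NormedSpace ℝ F] {f : E → F} {z : E} (hf : ContDiffAt ℝ 2 f z) :
    HasFDerivAt (fderiv ℝ f) (fderiv ℝ (fderiv ℝ f) z) z :=
  ((hf.fderiv_right (m := 1) le_rfl).differentiableAt one_ne_zero).hasFDerivAt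

theorem HasFDerivAt.fun_div {𝕜 𝕜' E : Type*} [NontriviallyNormedField 𝕜]
    [NontriviallyNormedField 𝕜'] [NormedAlgebra 𝕜 𝕜'] [NormedAddCommGroup E] [NormedSpace 𝕜 E] {g h : E → 𝕜'}
    {g' h' : E →L[𝕜] 𝕜'} {z : E} (hg : HasFDerivAt g g' z) (hh : HasFDerivAt h h' z)
    (hz : h z ≠ 0) :
    HasFDerivAt (fun y => g y / h y) ((h z)⁻¹ • g' - (g z / h z ^ 2) • h') z := by
  convert hg.fun_mul ((hasFDerivAt_inv' (𝕜 := 𝕜) hz).comp z hh) using 1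
  · funext y; exact div_eq_mul_inv _ _
  · ext u
    simp only [sub_apply, smul_apply, smul_eq_mul, ContinuousLinearMap.neg_comp, smul_neg,
      Function.comp_apply, add_apply, neg_apply, ContinuousLinearMap.comp_apply,
      ContinuousLinearMap.mulLeftRight_apply]
    ring

theorem mul_fderiv_sub_eq_of_fderiv_div_eq {𝕜 𝕜' E : Type*} [NontriviallyNormedField 𝕜]
    [NontriviallyNormedField 𝕜'] [NormedAlgebra 𝕜 𝕜'] [NormedAddCommGroup E] [NormedSpace 𝕜 E]
    {g h : E → 𝕜'} {z : E} (hg : DifferentiableAt 𝕜 g z) (hh : DifferentiableAt 𝕜 h z)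
    (hz : h z ≠ 0) {c : 𝕜'} {x y : E}
    (H : fderiv 𝕜 (fun y => g y / h y) z x = c * fderiv 𝕜 (fun y => g y / h y) z y) :
    h z * (fderiv 𝕜 g z x - c * fderiv 𝕜 g z y) = g z * (fderiv 𝕜 h z x - c * fderiv 𝕜 h z y) := by
  rw [(hg.hasFDerivAt.fun_div hh.hasFDerivAt hz).fderiv] at H
  simp only [sub_apply, smul_apply, smul_eq_mul] at H
  field_simp at H
  linear_combination H

theorem sum_mul_eq_zero_of_mul_eq_mul {K ι : Type*} [Field K] [Fintype ι] {f b w : ι → K} {L : ι}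
    (hL : f L ≠ 0) (hfb : ∀ j, f L * b j = f j * b L) (hfw : ∑ j, f j * w j = 0) :
    ∑ j, w j * b j = 0 := by
  refine (mul_eq_zero.1 ?_).resolve_left hL
  calc f L * ∑ j, w j * b j = (∑ j, f j * w j) * b L := by
        rw [Finset.mul_sum, Finset.sum_mul]
        exact Finset.sum_congr rfl fun j _ => by linear_combination w j * hfb j
    _ = 0 := by rw [hfw, zero_mul]

section Wirtinger

variable {n : ℕ} {f : EuclideanSpace ℂ (Fin n) → ℂ} {z : EuclideanSpace ℂ (Fin n)}

theorem fderiv_apply_single_eq_wDz (k : Fin n) (c : ℂ) :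
    fderiv ℝ f z (EuclideanSpace.single k c) = wDz n k f z * c + wDzBar n k f z * conj c := by
  have hc : EuclideanSpace.single k c
      = c.re • EuclideanSpace.single k 1 + c.im • EuclideanSpace.single k I := by
    ext m
    by_cases hm : m = k
    · simp only [hm, PiLp.add_apply, PiLp.smul_apply, PiLp.single_eq_same, real_smul]
      linear_combination (re_add_im c).symm
    · simp [hm]
  rw [hc, map_add, map_smul, map_smul, wDz, wDzBar, real_smul, real_smul]
  conv_rhs => rw [← re_add_im c]
  simp only [map_add, map_mul, conj_ofReal, conj_I]
  linear_combination (c.im : ℂ) * fderiv ℝ f z (EuclideanSpace.single k I) * I_sq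

theorem fderiv_apply_eq_sum_wDz (w : EuclideanSpace ℂ (Fin n)) :
    fderiv ℝ f z w = ∑ k, (wDz n k f z * w k + wDzBar n k f z * conj (w k)) := by
  conv_lhs => rw [← EuclideanSpace.sum_single_apply w]
  simp only [map_sum, fderiv_apply_single_eq_wDz]

theorem sum_wDz_mul_eq (w : EuclideanSpace ℂ (Fin n)) :
    ∑ k, wDz n k f z * w k = (fderiv ℝ f z w - I * fderiv ℝ f z (I • w)) / 2 := by
  simp only [fderiv_apply_eq_sum_wDz, PiLp.smul_apply, smul_eq_mul, map_mul, conj_I,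
    Finset.mul_sum, ← Finset.sum_sub_distrib, Finset.sum_div]
  refine Finset.sum_congr rfl fun k _ => ?_
  linear_combination (wDz n k f z * w k - wDzBar n k f z * conj (w k)) / 2 * I_sq

theorem fderiv_I_smul_sub_eq_sum_wDzBar (w : EuclideanSpace ℂ (Fin n)) :
    fderiv ℝ f z (I • w) - I * fderiv ℝ f z w
      = -2 * I * ∑ k, wDzBar n k f z * conj (w k) := by
  simp only [fderiv_apply_eq_sum_wDz, PiLp.smul_apply, smul_eq_mul, map_mul, conj_I,
    Finset.mul_sum, ← Finset.sum_sub_distrib]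
  exact Finset.sum_congr rfl fun k _ => by ring

theorem hasFDerivAt_wDz {B : EuclideanSpace ℂ (Fin n) →L[ℝ] EuclideanSpace ℂ (Fin n) →L[ℝ] ℂ}
    (hB : HasFDerivAt (fderiv ℝ f) B z) (j : Fin n) :
    HasFDerivAt (wDz n j f)
      ((2 : ℂ)⁻¹ • (B.flip (EuclideanSpace.single j 1) - I • B.flip (EuclideanSpace.single j I)))
      z := by
  have hfun : wDz n j f = fun y => (2 : ℂ)⁻¹ * (fderiv ℝ f y (EuclideanSpace.single j 1)
      - I * fderiv ℝ f y (EuclideanSpace.single j I)) :=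
    funext fun y => by rw [wDz, div_eq_inv_mul]
  rw [hfun]
  exact ((hasFDerivAt_fderiv_apply hB _).fun_sub
    ((hasFDerivAt_fderiv_apply hB _).const_mul I)).const_mul _

theorem hasFDerivAt_wDzBar {B : EuclideanSpace ℂ (Fin n) →L[ℝ] EuclideanSpace ℂ (Fin n) →L[ℝ] ℂ}
    (hB : HasFDerivAt (fderiv ℝ f) B z) (j : Fin n) :
    HasFDerivAt (wDzBar n j f)
      ((2 : ℂ)⁻¹ • (B.flip (EuclideanSpace.single j 1) + I • B.flip (EuclideanSpace.single j I)))
      z := by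
  have hfun : wDzBar n j f = fun y => (2 : ℂ)⁻¹ * (fderiv ℝ f y (EuclideanSpace.single j 1)
      + I * fderiv ℝ f y (EuclideanSpace.single j I)) :=
    funext fun y => by rw [wDzBar, div_eq_inv_mul]
  rw [hfun]
  exact ((hasFDerivAt_fderiv_apply hB _).fun_add
    ((hasFDerivAt_fderiv_apply hB _).const_mul I)).const_mul _

theorem ContDiffAt.differentiableAt_wDz (hf : ContDiffAt ℝ 2 f z) (j : Fin n) :
    DifferentiableAt ℝ (wDz n j f) z :=
  (hasFDerivAt_wDz hf.hasFDerivAt_fderiv j).differentiableAt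

theorem ContDiffAt.wDz_wDzBar_comm (hf : ContDiffAt ℝ 2 f z) (j k : Fin n) :
    wDz n j (wDzBar n k f) z = wDzBar n k (wDz n j f) z := by
  have hsymm := hf.isSymmSndFDerivAt (by simp)
  rw [wDz, wDzBar, (hasFDerivAt_wDz hf.hasFDerivAt_fderiv j).fderiv,
    (hasFDerivAt_wDzBar hf.hasFDerivAt_fderiv k).fderiv]
  simp only [smul_apply, add_apply, sub_apply, ContinuousLinearMap.flip_apply, smul_eq_mul]
  rw [hsymm (EuclideanSpace.single j 1) (EuclideanSpace.single k 1),
    hsymm (EuclideanSpace.single j 1) (EuclideanSpace.single k I),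
    hsymm (EuclideanSpace.single j I) (EuclideanSpace.single k 1),
    hsymm (EuclideanSpace.single j I) (EuclideanSpace.single k I)]
  ring

theorem ContDiffAt.fderiv_wDz_I_smul_sub (hf : ContDiffAt ℝ 2 f z) (j : Fin n)
    (w : EuclideanSpace ℂ (Fin n)) :
    fderiv ℝ (wDz n j f) z (I • w) - I * fderiv ℝ (wDz n j f) z w
      = -2 * I * ∑ k, wDz n j (wDzBar n k f) z * conj (w k) := by
  simp only [fderiv_I_smul_sub_eq_sum_wDzBar, hf.wDz_wDzBar_comm]

theorem ContDiffAt.mul_sum_wDz_wDzBar_eq_of_fderiv_div_eq (hf : ContDiffAt ℝ 2 f z) {j L : Fin n}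
    (hL : wDz n L f z ≠ 0) {w : EuclideanSpace ℂ (Fin n)}
    (H : fderiv ℝ (fun y => wDz n j f y / wDz n L f y) z (I • w)
      = I * fderiv ℝ (fun y => wDz n j f y / wDz n L f y) z w) :
    wDz n L f z * ∑ k, wDz n j (wDzBar n k f) z * conj (w k)
      = wDz n j f z * ∑ k, wDz n L (wDzBar n k f) z * conj (w k) := by
  have h := mul_fderiv_sub_eq_of_fderiv_div_eq (hf.differentiableAt_wDz j)
    (hf.differentiableAt_wDz L) hL H
  rw [hf.fderiv_wDz_I_smul_sub, hf.fderiv_wDz_I_smul_sub] at h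
  apply mul_left_cancel₀ (show -2 * I ≠ 0 by simp)
  linear_combination h

end Wirtinger

section RealDefiningFunction

variable {n : ℕ} {ρ : EuclideanSpace ℂ (Fin n) → ℝ} {z : EuclideanSpace ℂ (Fin n)}

theorem fderiv_ofReal_comp_apply (hρ : DifferentiableAt ℝ ρ z) (u : EuclideanSpace ℂ (Fin n)) :
    fderiv ℝ (fun v => ((ρ v : ℝ) : ℂ)) z u = fderiv ℝ ρ z u :=
  congrArg (· u) (ofRealCLM.hasFDerivAt.comp z hρ.hasFDerivAt).fderiv

theorem cGradPair_eq_zero_of_fderiv_eq_zero (hρ : DifferentiableAt ℝ ρ z)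
    {w : EuclideanSpace ℂ (Fin n)} (hw : fderiv ℝ ρ z w = 0) (hIw : fderiv ℝ ρ z (I • w) = 0) :
    cGradPair n ρ z w = 0 := by
  rw [cGradPair, sum_wDz_mul_eq, fderiv_ofReal_comp_apply hρ, fderiv_ofReal_comp_apply hρ, hw, hIw]
  simp

theorem cHessForm_eq_sum_mul (w : Fin n → ℂ) :
    cHessForm n ρ z w = ∑ i, w i * ∑ k, cHess n ρ z i k * conj (w k) := by
  simp only [cHessForm, Finset.mul_sum]
  exact Finset.sum_congr rfl fun i _ => Finset.sum_congr rfl fun k _ => by ring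

end RealDefiningFunction

theorem exists_castLE_eq_of_ne_lastIdx {n : ℕ} (hn : 0 < n) {j : Fin n} (hj : j ≠ lastIdx n hn) :
    ∃ j' : Fin (n - 1), Fin.castLE (Nat.sub_le n 1) j' = j :=
  ⟨⟨j, by
    have : (j : ℕ) ≠ n - 1 := fun h => hj (Fin.ext h)
    omega⟩, rfl⟩

theorem hasFDerivAt_websterMap {n : ℕ} (hn : 0 < n) {ρ : EuclideanSpace ℂ (Fin n) → ℝ}
    {z : EuclideanSpace ℂ (Fin n)} (hρ : ContDiffAt ℝ 2 (fun v => ((ρ v : ℝ) : ℂ)) z)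
    (hz : wDz n (lastIdx n hn) (fun v => ((ρ v : ℝ) : ℂ)) z ≠ 0) :
    HasFDerivAt (websterMap n hn ρ)
      ((ContinuousLinearMap.id ℝ _).prod (ContinuousLinearMap.pi fun j => fderiv ℝ
        (fun y => wDz n (Fin.castLE (Nat.sub_le n 1) j) (fun v => ((ρ v : ℝ) : ℂ)) y /
          wDz n (lastIdx n hn) (fun v => ((ρ v : ℝ) : ℂ)) y) z)) z :=
  (hasFDerivAt_id z).prodMk <| hasFDerivAt_pi.2 fun _ =>
    ((hρ.differentiableAt_wDz _).hasFDerivAt.fun_div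
      (hρ.differentiableAt_wDz _).hasFDerivAt hz).differentiableAt.hasFDerivAt

/-- Webster. The image under `G` of a strictly pseudoconvex
hypersurface `M` is totally real at `G(z⁰)`: the image `T` of the real tangent space
`T_{z⁰}M = ker(dρ)` under `dG_{z⁰}` satisfies `T ∩ iT = {0}`. -/
theorem webster_totally_real (n : ℕ) (hn : 1 < n)
    (U M : Set (EuclideanSpace ℂ (Fin n))) (hU : IsOpen U)
    (ρ : EuclideanSpace ℂ (Fin n) → ℝ) (hρ : ContDiffOn ℝ (⊤ : ℕ∞) ρ U)
    (hM : M = {z ∈ U | ρ z = 0})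
    (hspc : ∀ z ∈ M, ∀ w : Fin n → ℂ, w ≠ 0 →
      cGradPair n ρ z w = 0 → 0 < (cHessForm n ρ z w).re)
    (z0 : EuclideanSpace ℂ (Fin n)) (hz0 : z0 ∈ M)
    (hzn : wDz n (lastIdx n (by omega)) (fun v => ((ρ v : ℝ) : ℂ)) z0 ≠ 0) :
    ∀ v w : EuclideanSpace ℂ (Fin n),
      fderiv ℝ ρ z0 v = 0 → fderiv ℝ ρ z0 w = 0 →
      fderiv ℝ (websterMap n (by omega) ρ) z0 v
        = Complex.I • fderiv ℝ (websterMap n (by omega) ρ) z0 w →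
      fderiv ℝ (websterMap n (by omega) ρ) z0 v = 0 := by
  intro v w hv hw hvw
  have hρ2 : ContDiffAt ℝ 2 ρ z0 :=
    (hρ.contDiffAt (hU.mem_nhds (hM ▸ hz0).1)).of_le (WithTop.coe_le_coe.2 le_top)
  have hρC2 : ContDiffAt ℝ 2 (fun v => ((ρ v : ℝ) : ℂ)) z0 :=
    ofRealCLM.contDiff.contDiffAt.comp z0 hρ2
  have hG := hasFDerivAt_websterMap (by omega) hρC2 hzn
  rw [hG.fderiv] at hvw ⊢
  obtain ⟨hvI, hda⟩ := Prod.ext_iff.1 hvw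
  simp only [ContinuousLinearMap.prod_apply, ContinuousLinearMap.id_apply,
    ContinuousLinearMap.coe_pi', Prod.smul_mk] at hvI hda
  suffices hw0 : w = 0 by rw [hvw, hw0, map_zero, smul_zero]
  have hgrad0 : cGradPair n ρ z0 w = 0 :=
    cGradPair_eq_zero_of_fderiv_eq_zero (hρ2.differentiableAt two_ne_zero) hw (hvI ▸ hv)
  have hrows : ∀ j, wDz n (lastIdx n (by omega)) (fun v => ((ρ v : ℝ) : ℂ)) z0
        * ∑ k, cHess n ρ z0 j k * conj (w k)
      = wDz n j (fun v => ((ρ v : ℝ) : ℂ)) z0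
        * ∑ k, cHess n ρ z0 (lastIdx n (by omega)) k * conj (w k) := by
    intro j
    by_cases hj : j = lastIdx n (by omega)
    · rw [hj, mul_comm]
    obtain ⟨j, rfl⟩ := exists_castLE_eq_of_ne_lastIdx _ hj
    exact hρC2.mul_sum_wDz_wDzBar_eq_of_fderiv_div_eq hzn (hvI ▸ congrFun hda j)
  have hform : cHessForm n ρ z0 w = 0 := by
    rw [cHessForm_eq_sum_mul]
    exact sum_mul_eq_zero_of_mul_eq_mul hzn hrows hgrad0
  by_contra hw0
  have := hspc z0 hz0 w (by simpa using hw0) hgrad0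
  simp [hform] at this
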